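/- Let T be a positive integer, let δ : ℕ → ℝ be a sequence with δ_t = 0 for t > T, let c : ℕ → ℝ (per-token weighted gradient terms, scalar surrogate), and let β ∈ ℝ be a decay factor. Define the eligibility trace e : ℕ → ℝ recursively by e_0 = 0 and e_t = c_t + β · e_{t-1}. Then the double sum ∑_{t=1}^{T} c_t · (∑_{k=0}^{∞} β^k δ_{t+k}) equals ∑_{t=1}^{T} δ_t · e_t. -/

import Mathlib

open Finset

theorem stmt_0 (T : ℕ) (hT : 0 < T) (δ c e : ℕ → ℝ) (β : ℝ)
    (hδ : ∀ t, T < t → δ t = 0)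
    (he0 : e 0 = 0)
    (he : ∀ t, 1 ≤ t → e t = c t + β * e (t - 1)) :
    ∑ t ∈ Finset.Icc 1 T, c t * (∑' k : ℕ, β ^ k * δ (t + k)) =
      ∑ t ∈ Finset.Icc 1 T, δ t * e t := by
  -- closed form for e
  have he' : ∀ s, e s = ∑ t ∈ Finset.Icc 1 s, β ^ (s - t) * c t := by
    intro s
    induction s with
    | zero => simp [he0]
    | succ n ih =>
      have h1 : e (n + 1) = c (n + 1) + β * e n := by simpa using he (n + 1) (by omega)
      rw [h1, ih,
        Finset.sum_Icc_succ_top (Nat.le_add_left 1 n) (fun t => β ^ (n + 1 - t) * c t),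
        Nat.sub_self, pow_zero, one_mul, Finset.mul_sum, add_comm]
      congr 1
      refine Finset.sum_congr rfl fun t ht => ?_
      have h2 := (Finset.mem_Icc.mp ht).2
      rw [← mul_assoc, ← pow_succ']
      congr 2
      omega
  -- evaluate the tsum
  have htsum : ∀ t ∈ Finset.Icc 1 T, c t * (∑' k : ℕ, β ^ k * δ (t + k)) =
      ∑ s ∈ Finset.Icc 1 T, if t ≤ s then c t * (β ^ (s - t) * δ s) else 0 := by
    intro t ht
    obtain ⟨ht1, ht2⟩ := Finset.mem_Icc.mp ht
    have h1 : (∑' k : ℕ, β ^ k * δ (t + k)) = ∑ k ∈ Finset.range (T + 1), β ^ k * δ (t + k) := by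
      refine tsum_eq_sum fun k hk => ?_
      have : T < t + k := by simp [Finset.mem_range] at hk; omega
      rw [hδ _ this, mul_zero]
    have h2 : ∑ k ∈ Finset.range (T + 1), β ^ k * δ (t + k) =
        ∑ k ∈ Finset.range (T + 1 - t), β ^ k * δ (t + k) := by
      refine (Finset.sum_subset (Finset.range_subset_range.mpr (by omega)) fun k hk hk' => ?_).symm
      have : T < t + k := by simp [Finset.mem_range] at hk hk'; omega
      rw [hδ _ this, mul_zero]
    have h3 : ∑ s ∈ Finset.Icc t T, β ^ (s - t) * δ s =
        ∑ k ∈ Finset.range (T + 1 - t), β ^ k * δ (t + k) := by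
      rw [show Finset.Icc t T = Finset.Ico t (T + 1) by rfl, Finset.sum_Ico_eq_sum_range]
      refine Finset.sum_congr rfl fun k hk => ?_
      have : t + k - t = k := by omega
      rw [this]
    rw [h1, h2, ← h3, Finset.mul_sum, ← Finset.sum_filter]
    congr 1
    ext s
    simp only [Finset.mem_filter, Finset.mem_Icc]
    omega
  rw [Finset.sum_congr rfl htsum, Finset.sum_comm]
  refine Finset.sum_congr rfl fun s hs => ?_
  obtain ⟨hs1, hs2⟩ := Finset.mem_Icc.mp hs
  rw [he', ← Finset.sum_filter, Finset.mul_sum]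
  have : Finset.filter (fun t => t ≤ s) (Finset.Icc 1 T) = Finset.Icc 1 s := by
    ext t; simp only [Finset.mem_filter, Finset.mem_Icc]; omega
  rw [this]
  refine Finset.sum_congr rfl fun t ht => ?_
  ring
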